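/- arXiv:2502.08016 — 5 statements merged into one kernel-verified Lean document; each statement's English description precedes it below -/
import Mathlib

section
/- Let k, n be positive integers with k ≤ n and let g = gcd(k, n). The solution space of the system of n linear equations x_j + x_{j+1} + ... + x_{j+k-1} = 0 for j = 1, ..., n (indices taken cyclically modulo n) in variables x_1, ..., x_n over ℝ has dimension g - 1. -/
open Finset

/-- The linear map sending `x : ZMod n → ℝ` to the vector of cyclic window sums of length `k`:
`j ↦ x j + x (j+1) + ⋯ + x (j+k-1)`. -/
def windowSum (k n : ℕ) : (ZMod n → ℝ) →ₗ[ℝ] (ZMod n → ℝ) where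
  toFun x := fun j => ∑ t ∈ Finset.range k, x (j + (t : ZMod n))
  map_add' x y := by
    funext j
    simp [Finset.sum_add_distrib]
  map_smul' c x := by
    funext j
    simp [Finset.mul_sum]

/-!
A solution `x` of the system satisfies `x (j + k) = x j`, since consecutive windows differ only in
their end points; as `x` is also `n`-periodic, it is `gcd(k, n)`-periodic (Bézout), i.e. it
factors through `ZMod n → ZMod (gcd k n)`. A window of length `k` then covers each residue class
mod `gcd k n` exactly `k / gcd k n` times, so the equations reduce to the single condition that
the induced function on `ZMod (gcd k n)` has sum zero: a hyperplane of dimension `gcd k n - 1`.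
-/

open Function

@[simp]
lemma windowSum_apply (k n : ℕ) (x : ZMod n → ℝ) (j : ZMod n) :
    windowSum k n x j = ∑ t ∈ range k, x (j + t) :=
  rfl

/-- Both sides are the sum over the window of length `k + 1` starting at `j`. -/
lemma windowSum_add_apply_add_natCast (k n : ℕ) (x : ZMod n → ℝ) (j : ZMod n) :
    windowSum k n x j + x (j + k) = windowSum k n x (j + 1) + x j := by
  have h := (sum_range_succ (fun t => x (j + t)) k).symm.trans
    (sum_range_succ' (fun t => x (j + t)) k)
  simpa only [windowSum_apply, Nat.cast_succ, add_assoc, add_comm (1 : ZMod n), Nat.cast_zero,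
    add_zero] using h

lemma periodic_of_windowSum_eq_zero {k n : ℕ} {x : ZMod n → ℝ} (hx : windowSum k n x = 0) :
    Periodic x (k : ZMod n) := fun j => by
  simpa only [hx, Pi.zero_apply, zero_add] using windowSum_add_apply_add_natCast k n x j

lemma Function.Periodic.natCast_gcd {α : Type*} {k n : ℕ} {f : ZMod n → α}
    (hf : Periodic f (k : ZMod n)) : Periodic f (Nat.gcd k n : ZMod n) := by
  have hbezout : ((Nat.gcd k n : ℕ) : ZMod n) = Nat.gcdA k n • (k : ZMod n) := by
    rw [zsmul_eq_mul, ← Int.cast_natCast, Nat.gcd_eq_gcd_ab]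
    push_cast
    rw [ZMod.natCast_self]
    ring
  rw [hbezout]
  exact hf.zsmul _

lemma Function.Periodic.factorsThrough_castHom {α : Type*} {d n : ℕ} (hd : d ∣ n)
    {f : ZMod n → α} (hf : Periodic f (d : ZMod n)) :
    f.FactorsThrough (ZMod.castHom hd (ZMod d)) := by
  intro a b hab
  obtain ⟨a, rfl⟩ := ZMod.intCast_surjective a
  obtain ⟨b, rfl⟩ := ZMod.intCast_surjective b
  simp only [map_intCast] at hab
  obtain ⟨m, hm⟩ := (ZMod.intCast_eq_intCast_iff_dvd_sub a b d).mp hab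
  rw [eq_add_of_sub_eq' hm, Int.cast_add, Int.cast_mul, Int.cast_natCast, mul_comm,
    ← zsmul_eq_mul]
  exact (hf.zsmul m _).symm

lemma ZMod.sum_range_natCast {M : Type*} [AddCommMonoid M] {d : ℕ} [NeZero d]
    (g : ZMod d → M) : ∑ t ∈ range d, g t = ∑ r, g r :=
  sum_nbij' (↑) ZMod.val (fun _ _ => mem_univ _) (fun r _ => mem_range.2 r.val_lt)
    (fun _ ht => ZMod.val_natCast_of_lt (mem_range.1 ht)) (fun r _ => ZMod.natCast_zmod_val r)
    (fun _ _ => rfl)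

lemma ZMod.sum_range_mul_add_natCast {M : Type*} [AddCommMonoid M] {d : ℕ} [NeZero d]
    (y : ZMod d → M) (a : ZMod d) (m : ℕ) :
    ∑ t ∈ range (m * d), y (a + t) = m • ∑ r, y r := by
  induction m with
  | zero => simp
  | succ m ih =>
    rw [Nat.succ_mul, sum_range_add, ih, succ_nsmul]
    congr 1
    simp only [Nat.cast_add, Nat.cast_mul, ZMod.natCast_self, mul_zero, zero_add]
    rw [ZMod.sum_range_natCast fun r => y (a + r)]
    exact Fintype.sum_equiv (Equiv.addLeft a) _ _ fun _ => rfl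

lemma windowSum_comp_castHom {k n d : ℕ} [NeZero d] (hdk : d ∣ k) (hdn : d ∣ n)
    (y : ZMod d → ℝ) :
    windowSum k n (y ∘ ZMod.castHom hdn (ZMod d)) = fun _ => (k / d) • ∑ r, y r := by
  funext j
  obtain ⟨m, rfl⟩ := hdk
  rw [windowSum_apply, Nat.mul_div_cancel_left m (Nat.pos_of_neZero d), mul_comm,
    ← ZMod.sum_range_mul_add_natCast y (ZMod.castHom hdn (ZMod d) j)]
  simp only [comp_apply, map_add, map_natCast]

@[simp]
lemma Pi.basisFun_sumCoords_apply {R ι : Type*} [Semiring R] [Fintype ι] (y : ι → R) :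
    (Pi.basisFun R ι).sumCoords y = ∑ i, y i := by
  simp [Module.Basis.coe_sumCoords_of_fintype, -Module.Basis.coe_sumCoords, LinearMap.sum_apply]

lemma Pi.finrank_ker_basisFun_sumCoords {K ι : Type*} [Field K] [Fintype ι] [Nonempty ι] :
    Module.finrank K (LinearMap.ker (Pi.basisFun K ι).sumCoords) = Fintype.card ι - 1 := by
  have hne : (Pi.basisFun K ι).sumCoords ≠ 0 := fun h => by
    simpa [h] using (Pi.basisFun K ι).sumCoords_self_apply (i := Classical.arbitrary ι)
  have := Module.Dual.finrank_ker_add_one_of_ne_zero hne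
  rw [Module.finrank_fintype_fun_eq_card] at this
  omega

lemma ker_windowSum {k n : ℕ} [NeZero (k.gcd n)] (hk : 0 < k) :
    LinearMap.ker (windowSum k n) =
      (LinearMap.ker (Pi.basisFun ℝ (ZMod (k.gcd n))).sumCoords).map
        (LinearMap.funLeft ℝ ℝ (ZMod.castHom (k.gcd_dvd_right n) (ZMod (k.gcd n)))) := by
  have hsum := windowSum_comp_castHom (k.gcd_dvd_left n) (k.gcd_dvd_right n)
  have hkd : k / k.gcd n ≠ 0 :=
    (Nat.div_pos (Nat.gcd_le_left n hk) (Nat.gcd_pos_of_pos_left n hk)).ne'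
  ext x
  constructor
  · intro hx
    obtain ⟨y, rfl⟩ := (factorsThrough_iff _).mp
      ((periodic_of_windowSum_eq_zero hx).natCast_gcd.factorsThrough_castHom (k.gcd_dvd_right n))
    refine ⟨y, ?_, rfl⟩
    have hwindow := congrFun (hsum y) 0
    rw [hx] at hwindow
    simpa [hkd] using hwindow.symm
  · rintro ⟨y, hy, rfl⟩
    rw [SetLike.mem_coe, LinearMap.mem_ker] at hy
    rw [LinearMap.mem_ker]
    change windowSum k n (y ∘ _) = 0
    rw [hsum, ← Pi.basisFun_sumCoords_apply, hy, smul_zero]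
    rfl

theorem dim_pure_kinematic_shifts_general (k n : ℕ) (hk : 0 < k) :
    Module.finrank ℝ (LinearMap.ker (windowSum k n)) = Nat.gcd k n - 1 := by
  have : NeZero (k.gcd n) := ⟨(Nat.gcd_pos_of_pos_left n hk).ne'⟩
  have hinj := LinearMap.funLeft_injective_of_surjective ℝ ℝ _
    (ZMod.castHom_surjective (k.gcd_dvd_right n))
  rw [ker_windowSum hk, ← (Submodule.equivMapOfInjective _ hinj _).finrank_eq,
    Pi.finrank_ker_basisFun_sumCoords, ZMod.card]

/-- The solution space of the cyclic system `x_j + x_{j+1} + ⋯ + x_{j+k-1} = 0`, `j = 1, …, n`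
(indices mod `n`), has dimension `gcd(k,n) - 1`. -/
theorem dim_pure_kinematic_shifts (k n : ℕ) [NeZero n] (hk : 0 < k) (hkn : k ≤ n) :
    Module.finrank ℝ (LinearMap.ker (windowSum k n)) = Nat.gcd k n - 1 :=
  dim_pure_kinematic_shifts_general k n hk
end

section
/- In K_{2,n}, the planar variables X'_{i,j} = Σ_{i+1 ≤ a < b ≤ j} s_{ab}, indexed by pairs {i,j} that are not cyclically adjacent (i.e., j ≠ i±1 mod n), form a basis of the dual space of K_{2,n}; in particular there are n(n-3)/2 of them and K_{2,n} has dimension n(n-3)/2. -/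
/-- The kinematic space `K_{2,n}`: symmetric `n × n` real arrays with zero diagonal
satisfying momentum conservation `Σ_b s_{ab} = 0` for every `a`. -/
def K2 (n : ℕ) : Submodule ℝ (Fin n → Fin n → ℝ) where
  carrier := {s | (∀ a b, s a b = s b a) ∧ (∀ a, s a a = 0) ∧ ∀ a, ∑ b : Fin n, s a b = 0}
  add_mem' := by
    rintro x y ⟨hx1, hx2, hx3⟩ ⟨hy1, hy2, hy3⟩
    refine ⟨fun a b => by simp [hx1 a b, hy1 a b], fun a => by simp [hx2 a, hy2 a], fun a => ?_⟩
    simp only [Pi.add_apply]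
    rw [Finset.sum_add_distrib, hx3 a, hy3 a, add_zero]
  zero_mem' := ⟨fun a b => rfl, fun a => rfl, fun a => by simp⟩
  smul_mem' := by
    rintro c x ⟨h1, h2, h3⟩
    refine ⟨fun a b => by simp [h1 a b], fun a => by simp [h2 a], fun a => ?_⟩
    simp only [Pi.smul_apply, smul_eq_mul]
    rw [← Finset.mul_sum, h3 a, mul_zero]

/-- The planar variable `X'_{i,j} = Σ_{i+1 ≤ a < b ≤ j} s_{ab}` as a linear functional on
`K_{2,n}`. -/
def Xfun (n : ℕ) (i j : Fin n) : K2 n →ₗ[ℝ] ℝ where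
  toFun s := ∑ a ∈ Finset.Ioc i j, ∑ b ∈ (Finset.Ioc i j).filter (fun b => a < b),
    (s : Fin n → Fin n → ℝ) a b
  map_add' s t := by simp [Finset.sum_add_distrib]
  map_smul' c s := by simp [Finset.mul_sum]

/-- Pairs `(i, j)` with `i < j` that are not cyclically adjacent mod `n`. -/
def NonAdj (n : ℕ) : Type :=
  {p : Fin n × Fin n // p.1 < p.2 ∧
    ¬((p.2 : ℕ) = (p.1 : ℕ) + 1 ∨ ((p.1 : ℕ) = 0 ∧ (p.2 : ℕ) = n - 1))}

/-!
Write `T f i j = Σ_{i < a < b ≤ j} f a b` for arrays `f` indexed by `ℕ`, so that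
`X'_{i,j}(s) = T s i j`. Peeling off the first row of the region gives the mixed second
difference `f (a+1) (b+1) = T a (b+1) - T (a+1) (b+1) - T a b + T (a+1) b`. Hence the planar
variables (which vanish on adjacent pairs) determine every `s_{ab}` with `a, b ≥ 1`, and momentum
conservation then determines the rest: `s ↦ (X'_p s)_p` is injective on `K_{2,n}`. Conversely,
extend values `x_p` symmetrically by zero to a matrix `g`, and take the cyclic mixed difference
`s_{ab} = g_{a-1,b} + g_{a,b-1} - g_{ab} - g_{a-1,b-1}` (indices mod `n`). Its row sums telescope
around the cycle, so `s ∈ K_{2,n}`, and telescoping the double sum back gives `X'_p s = x_p`.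
So `s ↦ (X'_p s)_p` is a linear isomorphism, and the `X'_p` are its coordinate functionals. There
are `n.choose 2 - n = n(n-3)/2` of them, since the `n`-cycle has `n` edges.
-/

open Finset

section PlanarSum

variable {M : Type*}

def planarSum [AddCommMonoid M] (f : ℕ → ℕ → M) (i j : ℕ) : M :=
  ∑ a ∈ Ioc i j, ∑ b ∈ Ioc a j, f a b

section AddCommMonoid

variable [AddCommMonoid M] (f : ℕ → ℕ → M)

theorem planarSum_self_add_one (i : ℕ) : planarSum f i (i + 1) = 0 := by
  simp [planarSum]

theorem planarSum_eq_sum_add_planarSum_add_one (i j : ℕ) :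
    planarSum f i j = ∑ b ∈ Ioc (i + 1) j, f (i + 1) b + planarSum f (i + 1) j := by
  rcases lt_or_ge i j with h | h
  · rw [planarSum, ← insert_Ioc_add_one_left_eq_Ioc h, sum_insert (by simp)]
    rfl
  · simp [planarSum, Ioc_eq_empty_of_le h, Ioc_eq_empty_of_le (h.trans i.le_succ)]

theorem planarSum_add_one_right {i j : ℕ} (h : i ≤ j) :
    planarSum f i (j + 1) = planarSum f i j + ∑ a ∈ Ioc i j, f a (j + 1) := by
  rw [planarSum, sum_Ioc_succ_top h, Ioc_self, sum_empty, add_zero, planarSum,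
    ← sum_add_distrib]
  exact sum_congr rfl fun a ha => sum_Ioc_succ_top (mem_Ioc.1 ha).2 _

theorem two_nsmul_planarSum (hsymm : ∀ a b, f a b = f b a) (hdiag : ∀ a, f a a = 0)
    (i j : ℕ) : 2 • planarSum f i j = ∑ a ∈ Ioc i j, ∑ b ∈ Ioc i j, f a b := by
  rcases lt_or_ge j i with h | h
  · simp [planarSum, Ioc_eq_empty_of_le h.le]
  induction j, h using Nat.le_induction with
  | base => simp [planarSum]
  | succ j hij ih =>
    simp only [planarSum_add_one_right f hij, sum_Ioc_succ_top hij, sum_add_distrib, hdiag,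
      add_zero, nsmul_add, ih, two_nsmul, ← hsymm (j + 1)]
    abel

end AddCommMonoid

section AddCommGroup

variable [AddCommGroup M] (f : ℕ → ℕ → M)

theorem planarSum_mixed_diff {a b : ℕ} (h : a < b) :
    planarSum f a (b + 1) - planarSum f (a + 1) (b + 1) - (planarSum f a b - planarSum f (a + 1) b)
      = f (a + 1) (b + 1) := by
  simp only [planarSum_eq_sum_add_planarSum_add_one f a, add_sub_cancel_right,
    sum_Ioc_succ_top h, add_sub_cancel_left]

theorem planarSum_eq_of_mixed_diff {g : ℕ → ℕ → M} {j : ℕ} (hdiag : ∀ a, g a a = 0)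
    (hsucc : ∀ a < j, g a (a + 1) = 0)
    (hf : ∀ a b, a < b → b < j →
      f (a + 1) (b + 1) = g a (b + 1) - g (a + 1) (b + 1) - (g a b - g (a + 1) b))
    {i : ℕ} (hij : i ≤ j) : planarSum f i j = g i j := by
  refine Nat.decreasingInduction (motive := fun i _ => planarSum f i j = g i j)
    (fun k hk ih => ?_) (by simp [planarSum, hdiag]) hij
  set h := fun c => g k c - g (k + 1) c
  have hrow : ∑ b ∈ Ioc (k + 1) j, f (k + 1) b = g k j - g (k + 1) j := calc
    _ = ∑ c ∈ Ico (k + 1) j, (h (c + 1) - h c) := by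
      rw [← Ico_add_one_add_one_eq_Ioc, ← sum_Ico_add']
      exact sum_congr rfl fun c hc => hf k c (mem_Ico.1 hc).1 (mem_Ico.1 hc).2
    _ = h j - h (k + 1) := sum_Ico_sub h hk
    _ = g k j - g (k + 1) j := by simp [h, hsucc k hk, hdiag]
  rw [planarSum_eq_sum_add_planarSum_add_one, hrow, ih, sub_add_cancel]

end AddCommGroup

end PlanarSum

section KinematicSpace

variable {n : ℕ}

section NatExtend

variable {M : Type*} [Zero M]

def natExtend (s : Fin n → Fin n → M) (a b : ℕ) : M :=
  if h : a < n ∧ b < n then s ⟨a, h.1⟩ ⟨b, h.2⟩ else 0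

theorem natExtend_of_lt (s : Fin n → Fin n → M) {a b : ℕ} (ha : a < n) (hb : b < n) :
    natExtend s a b = s ⟨a, ha⟩ ⟨b, hb⟩ :=
  dif_pos ⟨ha, hb⟩

@[simp]
theorem natExtend_val (s : Fin n → Fin n → M) (a b : Fin n) : natExtend s a b = s a b :=
  natExtend_of_lt s a.2 b.2

theorem natExtend_comm {s : Fin n → Fin n → M} (hs : ∀ a b, s a b = s b a) (a b : ℕ) :
    natExtend s a b = natExtend s b a := by
  unfold natExtend
  by_cases h : a < n ∧ b < n
  · rw [dif_pos h, dif_pos h.symm, hs]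
  · rw [dif_neg h, dif_neg (mt And.symm h)]

theorem natExtend_self {s : Fin n → Fin n → M} (hs : ∀ a, s a a = 0) (a : ℕ) :
    natExtend s a a = 0 := by
  unfold natExtend
  split_ifs
  exacts [hs _, rfl]

end NatExtend

theorem Xfun_apply (i j : Fin n) (s : K2 n) :
    Xfun n i j s = planarSum (natExtend (s : Fin n → Fin n → ℝ)) i j := by
  have hfilter : ∀ a ∈ Ioc i j, (Ioc i j).filter (a < ·) = Ioc a j := fun a ha => by
    ext b
    simp only [mem_filter, mem_Ioc] at ha ⊢
    exact ⟨fun h => ⟨h.2, h.1.2⟩, fun h => ⟨⟨ha.1.trans h.1, h.2⟩, h.1⟩⟩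
  rw [Xfun, LinearMap.coe_mk, AddHom.coe_mk, planarSum.eq_def, ← Fin.map_valEmbedding_Ioc,
    sum_map]
  refine sum_congr rfl fun a ha => ?_
  rw [hfilter a ha, Fin.valEmbedding_apply, ← Fin.map_valEmbedding_Ioc, sum_map]
  simp

theorem sum_range_natExtend {s : Fin n → Fin n → ℝ} (hs : s ∈ K2 n) {a : ℕ} (ha : a < n) :
    ∑ b ∈ range n, natExtend s a b = 0 := by
  rw [← Fin.sum_univ_eq_sum_range, ← hs.2.2 ⟨a, ha⟩]
  exact sum_congr rfl fun b _ => natExtend_val s ⟨a, ha⟩ b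

/-- `2 X'_{0,n-1}(s)` is the sum of `s` over `{1, …, n-1}²`, which vanishes by momentum
conservation. -/
theorem Xfun_zero_last_eq_zero {s : K2 n} {i j : Fin n} (hi : (i : ℕ) = 0)
    (hj : (j : ℕ) = n - 1) : Xfun n i j s = 0 := by
  obtain ⟨s, hs⟩ := s
  let f := natExtend s
  have hcomm : ∀ a b, f a b = f b a := natExtend_comm hs.1
  have hdiag : ∀ a, f a a = 0 := natExtend_self hs.2.1
  have hn : 1 ≤ n := by omega
  have hrow : ∀ a < n, f a 0 + ∑ b ∈ Ico 1 n, f a b = 0 := fun a ha => by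
    rw [← sum_range_eq_add_Ico _ hn, sum_range_natExtend hs ha]
  have hinner : ∑ a ∈ Ico 1 n, ∑ b ∈ Ico 1 n, f a b = 0 := calc
    _ = ∑ a ∈ Ico 1 n, -f 0 a := sum_congr rfl fun a ha => by
      rw [hcomm 0 a, eq_neg_iff_add_eq_zero, add_comm, hrow a (mem_Ico.1 ha).2]
    _ = -(f 0 0 + ∑ a ∈ Ico 1 n, f 0 a) := by rw [hdiag, zero_add, sum_neg_distrib]
    _ = 0 := by rw [hrow 0 hn, neg_zero]
  have h2 := two_nsmul_planarSum f hcomm hdiag 0 (n - 1)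
  rw [← Ico_add_one_add_one_eq_Ioc, zero_add, Nat.sub_add_cancel hn, hinner, two_nsmul,
    ← two_mul] at h2
  rw [Xfun_apply, hi, hj]
  simpa using h2

def IsCycleEdge (n : ℕ) (i j : Fin n) : Prop :=
  (j : ℕ) = (i : ℕ) + 1 ∨ ((i : ℕ) = 0 ∧ (j : ℕ) = n - 1)

def IsNonAdjacent (n : ℕ) (i j : Fin n) : Prop :=
  i < j ∧ ¬IsCycleEdge n i j

instance : DecidableRel (IsCycleEdge n) := fun _ _ => inferInstanceAs (Decidable (_ ∨ _))

instance : DecidableRel (IsNonAdjacent n) := fun _ _ => inferInstanceAs (Decidable (_ ∧ _))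

def NonAdj.mk {i j : Fin n} (h : IsNonAdjacent n i j) : NonAdj n :=
  ⟨(i, j), h⟩

instance : Fintype (NonAdj n) :=
  inferInstanceAs (Fintype {p : Fin n × Fin n // IsNonAdjacent n p.1 p.2})

instance : DecidableEq (NonAdj n) :=
  inferInstanceAs (DecidableEq {p : Fin n × Fin n // IsNonAdjacent n p.1 p.2})

theorem Xfun_eq_zero_of_not_isNonAdjacent {i j : Fin n} (h : ¬IsNonAdjacent n i j) (s : K2 n) :
    Xfun n i j s = 0 := by
  rw [IsNonAdjacent, not_and, not_not, IsCycleEdge] at h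
  rcases lt_or_ge i j with hij | hji
  · rcases h hij with hsucc | ⟨hi, hj⟩
    · rw [Xfun_apply, hsucc, planarSum_self_add_one]
    · exact Xfun_zero_last_eq_zero hi hj
  · rw [Xfun_apply, planarSum, Ioc_eq_empty_of_le (Fin.le_def.1 hji), sum_empty]

def planarCoords (n : ℕ) : K2 n →ₗ[ℝ] NonAdj n → ℝ :=
  LinearMap.pi fun p => Xfun n p.1.1 p.1.2

theorem eq_zero_of_mem_K2_of_forall_ne {s : Fin n → Fin n → ℝ} (hs : s ∈ K2 n) (c : Fin n)
    (h : ∀ a b, a ≠ c → b ≠ c → s a b = 0) : s = 0 := by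
  have hcol : ∀ a, s a c = 0 := fun a => by
    by_cases ha : a = c
    · rw [ha, hs.2.1]
    · rw [← hs.2.2 a, sum_eq_single c (fun b _ hb => h a b ha hb) (by simp)]
  funext a b
  by_cases hb : b = c
  · rw [hb, hcol]
    rfl
  by_cases ha : a = c
  · rw [ha, hs.1, hcol]
    rfl
  exact h a b ha hb

theorem apply_eq_zero_of_forall_Xfun_eq_zero {s : K2 n} (hX : ∀ i j, Xfun n i j s = 0)
    {a b : Fin n} (ha : (a : ℕ) ≠ 0) (hab : a < b) : (s : Fin n → Fin n → ℝ) a b = 0 := by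
  let f := natExtend (s : Fin n → Fin n → ℝ)
  have hT : ∀ i j, i < n → j < n → planarSum f i j = 0 := fun i j hi hj => by
    simpa [Xfun_apply] using hX ⟨i, hi⟩ ⟨j, hj⟩
  have hb := b.2
  rw [Fin.lt_def] at hab
  obtain ⟨a', ha'⟩ := Nat.exists_eq_add_one_of_ne_zero ha
  obtain ⟨b', hb'⟩ : ∃ b', (b : ℕ) = b' + 1 := ⟨b - 1, by omega⟩
  rw [← natExtend_val (s : Fin n → Fin n → ℝ), ha', hb']
  change f (a' + 1) (b' + 1) = 0
  rw [← planarSum_mixed_diff f (by omega : a' < b'), hT _ _ (by omega) (by omega),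
    hT _ _ (by omega) (by omega), hT _ _ (by omega) (by omega), hT _ _ (by omega) (by omega),
    sub_self]

theorem planarCoords_injective : Function.Injective (planarCoords n) := by
  rw [injective_iff_map_eq_zero]
  intro s hs
  have hX : ∀ i j : Fin n, Xfun n i j s = 0 := fun i j => by
    by_cases h : IsNonAdjacent n i j
    · exact congr_fun hs (.mk h)
    · exact Xfun_eq_zero_of_not_isNonAdjacent h s
  rcases Nat.eq_zero_or_pos n with rfl | hn
  · ext a
    exact a.elim0
  refine Subtype.ext (eq_zero_of_mem_K2_of_forall_ne s.2 ⟨0, hn⟩ fun a b ha hb => ?_)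
  have ha : (a : ℕ) ≠ 0 := fun h => ha (Fin.ext h)
  have hb : (b : ℕ) ≠ 0 := fun h => hb (Fin.ext h)
  rcases lt_trichotomy a b with hab | rfl | hba
  · exact apply_eq_zero_of_forall_Xfun_eq_zero hX ha hab
  · exact s.2.2.1 a
  · rw [s.2.1]
    exact apply_eq_zero_of_forall_Xfun_eq_zero hX hb hba

theorem val_finRotate (a : Fin n) :
    (finRotate n a : ℕ) = if (a : ℕ) + 1 = n then 0 else (a : ℕ) + 1 := by
  cases n with
  | zero => exact a.elim0
  | succ n =>
    rw [coe_finRotate]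
    simp [Fin.ext_iff]

theorem finRotate_mk {a : ℕ} (h : a + 1 < n) : finRotate n ⟨a, by omega⟩ = ⟨a + 1, h⟩ :=
  Fin.ext <| by rw [val_finRotate, if_neg h.ne]

theorem not_isNonAdjacent_finRotate (a : Fin n) :
    ¬IsNonAdjacent n a (finRotate n a) ∧ ¬IsNonAdjacent n (finRotate n a) a := by
  have := a.2
  simp only [IsNonAdjacent, IsCycleEdge, Fin.lt_def, val_finRotate]
  split_ifs <;> omega

def planarExtend : (NonAdj n → ℝ) →ₗ[ℝ] Fin n → Fin n → ℝ where
  toFun x i j :=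
    if h : IsNonAdjacent n i j then x (.mk h)
    else if h' : IsNonAdjacent n j i then x (.mk h') else 0
  map_add' x y := by
    ext i j
    simp only [Pi.add_apply]
    split_ifs <;> simp
  map_smul' c x := by
    ext i j
    simp only [Pi.smul_apply, smul_eq_mul, RingHom.id_apply]
    split_ifs <;> simp

theorem planarExtend_of_isNonAdjacent (x : NonAdj n → ℝ) {i j : Fin n}
    (h : IsNonAdjacent n i j) : planarExtend x i j = x (.mk h) :=
  dif_pos h

theorem planarExtend_eq_zero (x : NonAdj n → ℝ) {i j : Fin n} (h : ¬IsNonAdjacent n i j)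
    (h' : ¬IsNonAdjacent n j i) : planarExtend x i j = 0 := by
  simp [planarExtend, h, h']

theorem planarExtend_comm (x : NonAdj n → ℝ) (i j : Fin n) :
    planarExtend x i j = planarExtend x j i := by
  by_cases h : IsNonAdjacent n i j
  · have h' : ¬IsNonAdjacent n j i := fun h' => lt_asymm h.1 h'.1
    simp [planarExtend, h, h']
  · by_cases h' : IsNonAdjacent n j i
    · simp [planarExtend, h, h']
    · rw [planarExtend_eq_zero x h h', planarExtend_eq_zero x h' h]

theorem planarExtend_self (x : NonAdj n → ℝ) (i : Fin n) : planarExtend x i i = 0 :=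
  planarExtend_eq_zero x (fun h => lt_irrefl i h.1) (fun h => lt_irrefl i h.1)

theorem planarExtend_finRotate (x : NonAdj n → ℝ) (i : Fin n) :
    planarExtend x i (finRotate n i) = 0 :=
  planarExtend_eq_zero x (not_isNonAdjacent_finRotate i).1 (not_isNonAdjacent_finRotate i).2

def cyclicMixedDiff : (Fin n → Fin n → ℝ) →ₗ[ℝ] Fin n → Fin n → ℝ where
  toFun g a b := g ((finRotate n).symm a) b + g a ((finRotate n).symm b) - g a b
    - g ((finRotate n).symm a) ((finRotate n).symm b)
  map_add' g h := by
    ext a b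
    simp only [Pi.add_apply]
    ring
  map_smul' c g := by
    ext a b
    simp only [Pi.smul_apply, smul_eq_mul, RingHom.id_apply]
    ring

theorem cyclicMixedDiff_mem_K2 {g : Fin n → Fin n → ℝ} (hcomm : ∀ a b, g a b = g b a)
    (hself : ∀ a, g a a = 0) (hrot : ∀ a, g a (finRotate n a) = 0) :
    cyclicMixedDiff g ∈ K2 n := by
  have hpred : ∀ a, g ((finRotate n).symm a) a = 0 := fun a => by
    simpa only [Equiv.apply_symm_apply] using hrot ((finRotate n).symm a)
  refine ⟨fun a b => ?_, fun a => ?_, fun a => ?_⟩ <;>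
    simp only [cyclicMixedDiff, LinearMap.coe_mk, AddHom.coe_mk]
  · rw [hcomm _ b, hcomm a, hcomm a b, hcomm ((finRotate n).symm a)]
    ring
  · rw [hcomm a, hpred, hself, hself]
    ring
  · simp only [sum_sub_distrib, sum_add_distrib, (finRotate n).symm.sum_comp (g a),
      (finRotate n).symm.sum_comp (g ((finRotate n).symm a))]
    ring

def planarInverse (n : ℕ) : (NonAdj n → ℝ) →ₗ[ℝ] K2 n :=
  (cyclicMixedDiff ∘ₗ planarExtend).codRestrict (K2 n) fun x =>
    cyclicMixedDiff_mem_K2 (planarExtend_comm x) (planarExtend_self x) (planarExtend_finRotate x)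

theorem planarCoords_planarInverse (x : NonAdj n → ℝ) :
    planarCoords n (planarInverse n x) = x := by
  funext ⟨⟨i, j⟩, hij⟩
  have hj := j.2
  have hpred : ∀ {a : ℕ} (h : a + 1 < n), (finRotate n).symm ⟨a + 1, h⟩ = ⟨a, by omega⟩ :=
    fun h => (Equiv.symm_apply_eq _).2 (finRotate_mk h).symm
  have hsucc : ∀ a < (j : ℕ), natExtend (planarExtend x) a (a + 1) = 0 := fun a ha => by
    have h : a + 1 < n := by omega
    rw [natExtend_of_lt _ (by omega) h, ← finRotate_mk h, planarExtend_finRotate]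
  have hmixed : ∀ a b : ℕ, a < b → b < (j : ℕ) →
      natExtend (planarInverse n x).1 (a + 1) (b + 1) =
        natExtend (planarExtend x) a (b + 1) - natExtend (planarExtend x) (a + 1) (b + 1) -
          (natExtend (planarExtend x) a b - natExtend (planarExtend x) (a + 1) b) := by
    intro a b hab hbj
    have h₁ : a < n := by omega
    have h₂ : a + 1 < n := by omega
    have h₃ : b < n := by omega
    have h₄ : b + 1 < n := by omega
    simp only [natExtend_of_lt _ h₁ h₃, natExtend_of_lt _ h₁ h₄, natExtend_of_lt _ h₂ h₃,
      natExtend_of_lt _ h₂ h₄, planarInverse, LinearMap.codRestrict_apply, LinearMap.comp_apply,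
      cyclicMixedDiff, LinearMap.coe_mk, AddHom.coe_mk, hpred]
    ring
  change Xfun n i j (planarInverse n x) = x (.mk hij)
  rw [Xfun_apply, planarSum_eq_of_mixed_diff _ (natExtend_self (planarExtend_self x)) hsucc hmixed
    hij.1.le, natExtend_val, planarExtend_of_isNonAdjacent _ hij]

noncomputable def planarEquiv (n : ℕ) : K2 n ≃ₗ[ℝ] NonAdj n → ℝ :=
  .ofBijective (planarCoords n)
    ⟨planarCoords_injective, Function.LeftInverse.surjective planarCoords_planarInverse⟩

theorem card_cycleEdges (hn : 3 ≤ n) :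
    #{p : Fin n × Fin n | p.1 < p.2 ∧ IsCycleEdge n p.1 p.2} = n := by
  let edge : Fin n → Fin n × Fin n := fun i =>
    if h : (i : ℕ) + 1 < n then (i, ⟨i + 1, h⟩) else (⟨0, by omega⟩, i)
  have hinj : Function.Injective edge := fun i j hij => by
    simp only [edge] at hij
    split_ifs at hij <;> simp only [Prod.ext_iff, Fin.ext_iff] at hij <;> ext <;> omega
  have himage : univ.image edge = ({p | p.1 < p.2 ∧ IsCycleEdge n p.1 p.2} : Finset _) := by
    ext ⟨a, b⟩
    simp only [mem_image, mem_univ, true_and, mem_filter, edge, Fin.lt_def, IsCycleEdge]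
    constructor
    · rintro ⟨i, hi⟩
      have := i.2
      split_ifs at hi <;> simp only [Prod.ext_iff, Fin.ext_iff] at hi <;> omega
    · rintro ⟨hab, h⟩
      have := b.2
      by_cases hb : (b : ℕ) = a + 1
      · exact ⟨a, by rw [dif_pos (by omega)]; ext <;> simp [hb]⟩
      · exact ⟨b, by rw [dif_neg (by omega)]; ext <;> simp; omega⟩
  rw [← himage, card_image_of_injective _ hinj, card_univ, Fintype.card_fin]

theorem card_nonAdj (n : ℕ) : Nat.card (NonAdj n) = n * (n - 3) / 2 := by
  have hcard : Nat.card (NonAdj n) = #{p : Fin n × Fin n | p.1 < p.2 ∧ ¬IsCycleEdge n p.1 p.2} := by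
    rw [Nat.card_eq_fintype_card]
    exact Fintype.card_subtype _
  rw [hcard]
  rcases lt_or_ge n 3 with hn | hn
  · rw [Nat.sub_eq_zero_of_le hn.le, mul_zero, Nat.zero_div, card_eq_zero, filter_eq_empty_iff]
    rintro ⟨i, j⟩ - ⟨hij, hedge⟩
    rw [Fin.lt_def] at hij
    exact hedge (by unfold IsCycleEdge; omega)
  have hsplit := card_filter_add_card_filter_not
    (s := ({p | p.1 < p.2} : Finset (Fin n × Fin n))) (fun p => IsCycleEdge n p.1 p.2)
  simp only [filter_filter] at hsplit
  rw [card_cycleEdges hn, Fintype.card_product_filter_lt, Fintype.card_fin] at hsplit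
  obtain ⟨m, rfl⟩ : ∃ m, n = m + 3 := ⟨n - 3, by omega⟩
  have hchoose := Nat.add_one_mul_choose_eq (m + 2) 1
  rw [Nat.choose_one_right] at hchoose
  rw [Nat.add_sub_cancel, eq_comm]
  apply Nat.div_eq_of_eq_mul_left two_pos
  linarith

end KinematicSpace

/-- The planar variables `X'_{i,j}` indexed by non-cyclically-adjacent pairs form a basis of the
dual space of `K_{2,n}`; in particular there are `n(n-3)/2` of them and
`dim K_{2,n} = n(n-3)/2`. -/
theorem planar_basis_of_dual (n : ℕ) :
    LinearIndependent ℝ (fun p : NonAdj n => Xfun n p.1.1 p.1.2) ∧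
    Submodule.span ℝ (Set.range (fun p : NonAdj n => Xfun n p.1.1 p.1.2)) = ⊤ ∧
    Nat.card (NonAdj n) = n * (n - 3) / 2 ∧
    Module.finrank ℝ (K2 n) = n * (n - 3) / 2 := by
  let b := (Module.Basis.ofEquivFun (planarEquiv n)).dualBasis
  have hb : ⇑b = fun p : NonAdj n => Xfun n p.1.1 p.1.2 := by
    ext p s
    exact (Module.Basis.dualBasis_apply _ p s).trans (Module.Basis.ofEquivFun_repr_apply _ s p)
  refine ⟨hb ▸ b.linearIndependent, hb ▸ b.span_eq, card_nonAdj n, ?_⟩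
  rw [(planarEquiv n).finrank_eq, Module.finrank_fintype_fun_eq_card, ← Nat.card_eq_fintype_card,
    card_nonAdj]
end

section
/- Let X_{13}, X_{14}, X_{15}, X_{24}, X_{25}, X_{26}, X_{35}, X_{36}, X_{46} be indeterminates (planar variables for 6 points) and let m6 be the sum of the 14 terms 1/(X_{14}X_{15}X_{24}) + 1/(X_{15}X_{24}X_{25}) + 1/(X_{24}X_{25}X_{26}) + 1/(X_{13}X_{15}X_{35}) + 1/(X_{15}X_{25}X_{35}) + 1/(X_{13}X_{14}X_{15}) + 1/(X_{13}X_{35}X_{36}) + 1/(X_{26}X_{35}X_{36}) + 1/(X_{13}X_{14}X_{46}) + 1/(X_{14}X_{24}X_{46}) + 1/(X_{24}X_{26}X_{46}) + 1/(X_{25}X_{26}X_{35}) + 1/(X_{26}X_{36}X_{46}) + 1/(X_{13}X_{36}X_{46}). Under the substitution X_{2i,2j} ↦ X_{2i,2j} - δ and X_{2i-1,2j-1} ↦ X_{2i-1,2j-1} + δ (i.e., X_{13}, X_{15}, X_{35} shifted by +δ; X_{24}, X_{26}, X_{46} shifted by -δ; X_{14}, X_{25}, X_{36} unshifted), the resulting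 rational function of δ, multiplied by δ⁴, tends as δ → ∞ to A6 = -(X_{13}+X_{15}+X_{24}+X_{26}+X_{35}+X_{46}) + (X_{15}+X_{26})(X_{24}+X_{35})/X_{25} + (X_{13}+X_{24})(X_{15}+X_{46})/X_{14} + (X_{13}+X_{26})(X_{35}+X_{46})/X_{36}. -/
/-!
The fourteen poles split by the unshifted variable they contain. The four containing `X₁₄` factor
as `X₁₄⁻¹ (1/(X₁₃+δ) + 1/(X₂₄-δ)) (1/(X₁₅+δ) + 1/(X₄₆-δ))`, and each bracket pairs a `+δ` pole
with a `-δ` pole, so it is `O(δ⁻²)` with leading coefficient `-(X₁₃+X₂₄)`, resp. `-(X₁₅+X₄₆)`;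
likewise for `X₂₅` and `X₃₆`. The two remaining poles `1/((X₁₃+δ)(X₁₅+δ)(X₃₅+δ))` and
`1/((X₂₄-δ)(X₂₆-δ)(X₄₆-δ))` cancel at order `δ⁻³`, leaving `-(X₁₃+X₁₅+X₂₄+X₂₆+X₃₅+X₄₆) δ⁻⁴`.
-/

open Filter Topology

lemma tendsto_atTop_of_eventuallyEq_comp_inv {f g : ℝ → ℝ} (hg : ContinuousAt g 0)
    (hfg : ∀ᶠ δ in atTop, f δ = g δ⁻¹) : Tendsto f atTop (𝓝 (g 0)) :=
  (hg.tendsto.comp tendsto_inv_atTop_zero).congr' (hfg.mono fun _ h => h.symm)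

lemma eventually_add_ne_zero_atTop (x : ℝ) : ∀ᶠ δ in atTop, x + δ ≠ 0 :=
  (eventually_gt_atTop (-x)).mono fun _ h => by linarith

lemma eventually_sub_ne_zero_atTop (x : ℝ) : ∀ᶠ δ in atTop, x - δ ≠ 0 :=
  (eventually_gt_atTop x).mono fun _ h => by linarith

lemma tendsto_sq_mul_one_div_add_one_div_sub (x y : ℝ) :
    Tendsto (fun δ : ℝ => δ ^ 2 * (1 / (x + δ) + 1 / (y - δ))) atTop (𝓝 (-(x + y))) := by
  have hg : ContinuousAt (fun u : ℝ => (x + y) / ((x * u + 1) * (y * u - 1))) 0 :=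
    ContinuousAt.div (by fun_prop) (by fun_prop) (by norm_num)
  convert tendsto_atTop_of_eventuallyEq_comp_inv hg ?_ using 2
  · norm_num [div_neg]
  filter_upwards [eventually_ne_atTop 0, eventually_add_ne_zero_atTop x,
    eventually_sub_ne_zero_atTop y] with δ hδ hx hy
  field_simp
  ring

lemma tendsto_pow_four_mul_one_div_prod_add_one_div_prod_sub (x y z u v w : ℝ) :
    Tendsto (fun δ : ℝ => δ ^ 4 *
      (1 / ((x + δ) * (y + δ) * (z + δ)) + 1 / ((u - δ) * (v - δ) * (w - δ))))
      atTop (𝓝 (-(x + y + z + u + v + w))) := by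
  -- `(x+δ)(y+δ)(z+δ) + (u-δ)(v-δ)(w-δ)` has degree 2 in `δ`; its coefficients form the numerator.
  have hg : ContinuousAt (fun t : ℝ =>
      ((x + y + z + u + v + w) + (x * y + y * z + z * x - (u * v + v * w + w * u)) * t
        + (x * y * z + u * v * w) * t ^ 2) /
      ((x * t + 1) * (y * t + 1) * (z * t + 1) * (u * t - 1) * (v * t - 1) * (w * t - 1))) 0 :=
    ContinuousAt.div (by fun_prop) (by fun_prop) (by norm_num)
  convert tendsto_atTop_of_eventuallyEq_comp_inv hg ?_ using 2
  · norm_num [div_neg]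
  filter_upwards [eventually_ne_atTop 0, eventually_add_ne_zero_atTop x,
    eventually_add_ne_zero_atTop y, eventually_add_ne_zero_atTop z,
    eventually_sub_ne_zero_atTop u, eventually_sub_ne_zero_atTop v,
    eventually_sub_ne_zero_atTop w] with δ hδ hx hy hz hu hv hw
  field_simp
  ring

theorem six_point_NLSM_limit_general (X13 X14 X15 X24 X25 X26 X35 X36 X46 : ℝ) :
    Tendsto (fun δ : ℝ => δ ^ 4 *
      (1 / (X14 * (X15 + δ) * (X24 - δ)) + 1 / ((X15 + δ) * (X24 - δ) * X25)
        + 1 / ((X24 - δ) * X25 * (X26 - δ)) + 1 / ((X13 + δ) * (X15 + δ) * (X35 + δ))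
        + 1 / ((X15 + δ) * X25 * (X35 + δ)) + 1 / ((X13 + δ) * X14 * (X15 + δ))
        + 1 / ((X13 + δ) * (X35 + δ) * X36) + 1 / ((X26 - δ) * (X35 + δ) * X36)
        + 1 / ((X13 + δ) * X14 * (X46 - δ)) + 1 / (X14 * (X24 - δ) * (X46 - δ))
        + 1 / ((X24 - δ) * (X26 - δ) * (X46 - δ)) + 1 / (X25 * (X26 - δ) * (X35 + δ))
        + 1 / ((X26 - δ) * X36 * (X46 - δ)) + 1 / ((X13 + δ) * X36 * (X46 - δ))))
      atTop
      (nhds (-(X13 + X15 + X24 + X26 + X35 + X46)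
        + (X15 + X26) * (X24 + X35) / X25
        + (X13 + X24) * (X15 + X46) / X14
        + (X13 + X26) * (X35 + X46) / X36)) := by
  have hpair := tendsto_sq_mul_one_div_add_one_div_sub
  have hlim := (((tendsto_pow_four_mul_one_div_prod_add_one_div_prod_sub X13 X15 X35 X24 X26 X46).add
    (((hpair X15 X26).mul (hpair X35 X24)).const_mul X25⁻¹)).add
    (((hpair X13 X24).mul (hpair X15 X46)).const_mul X14⁻¹)).add
    (((hpair X13 X26).mul (hpair X35 X46)).const_mul X36⁻¹)
  convert hlim using 2
  · simp only [one_div, mul_inv]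
    ring
  · ring

/-- Under the NLSM shift (`X₁₃, X₁₅, X₃₅ ↦ · + δ`; `X₂₄, X₂₆, X₄₆ ↦ · - δ`; `X₁₄, X₂₅, X₃₆`
fixed), `δ⁴` times the shifted 14-term 6-point biadjoint scalar amplitude tends, as `δ → ∞`,
to the 6-point NLSM amplitude. -/
theorem six_point_NLSM_limit (X13 X14 X15 X24 X25 X26 X35 X36 X46 : ℝ)
    (h13 : X13 ≠ 0) (h14 : X14 ≠ 0) (h15 : X15 ≠ 0) (h24 : X24 ≠ 0) (h25 : X25 ≠ 0)
    (h26 : X26 ≠ 0) (h35 : X35 ≠ 0) (h36 : X36 ≠ 0) (h46 : X46 ≠ 0) :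
    Tendsto (fun δ : ℝ => δ ^ 4 *
      (1 / (X14 * (X15 + δ) * (X24 - δ)) + 1 / ((X15 + δ) * (X24 - δ) * X25)
        + 1 / ((X24 - δ) * X25 * (X26 - δ)) + 1 / ((X13 + δ) * (X15 + δ) * (X35 + δ))
        + 1 / ((X15 + δ) * X25 * (X35 + δ)) + 1 / ((X13 + δ) * X14 * (X15 + δ))
        + 1 / ((X13 + δ) * (X35 + δ) * X36) + 1 / ((X26 - δ) * (X35 + δ) * X36)
        + 1 / ((X13 + δ) * X14 * (X46 - δ)) + 1 / (X14 * (X24 - δ) * (X46 - δ))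
        + 1 / ((X24 - δ) * (X26 - δ) * (X46 - δ)) + 1 / (X25 * (X26 - δ) * (X35 + δ))
        + 1 / ((X26 - δ) * X36 * (X46 - δ)) + 1 / ((X13 + δ) * X36 * (X46 - δ))))
      atTop
      (nhds (-(X13 + X15 + X24 + X26 + X35 + X46)
        + (X15 + X26) * (X24 + X35) / X25
        + (X13 + X24) * (X15 + X46) / X14
        + (X13 + X26) * (X35 + X46) / X36)) :=
  six_point_NLSM_limit_general X13 X14 X15 X24 X25 X26 X35 X36 X46
end

section
/- Let J = [2, k+1] ⊆ {1,...,n}, so |J| = k and J is a single cyclic interval, and set J' = {1, 3, 4, ..., k+1}. Then for every I with |I| = k and I ≠ J, the directed distances satisfy d_{J,I} - d_{J',I} = 1, and d_{J,J} - d_{J',J} = -(n-1), where d_{A,B} is the minimal number of steps in directions e_1-e_2, e_2-e_3, ..., e_n-e_1 to walk from e_A to e_B on the vertex set of the hypersimplex Δ_{k,n}. -/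
/-- `L_j(x) = Σ_{t=1}^{n-1} t · x_{j+t}` over `ℤ`, indices cyclic mod `n`. -/
def Lz (n : ℕ) (j : ZMod n) (x : ZMod n → ℤ) : ℤ :=
  ∑ s ∈ Finset.range n, (s : ℤ) * x (j + (s : ZMod n))

/-- Indicator vector `e_A ∈ ℤ^n` of a subset `A` of `ZMod n`. -/
def ind (n : ℕ) (A : Finset (ZMod n)) : ZMod n → ℤ := fun m => if m ∈ A then 1 else 0

/-- The directed distance `d_{A,B}` from `e_A` to `e_B` on the 1-skeleton of the hypersimplex,
walking in the cyclic root directions `e_1-e_2, …, e_n-e_1`; equivalently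
`d_{A,B} = -min_j L_j(e_B - e_A)`. -/
def ddist (n : ℕ) [NeZero n] (A B : Finset (ZMod n)) : ℤ :=
  - Finset.univ.inf' Finset.univ_nonempty (fun j : ZMod n => Lz n j (ind n B - ind n A))

/-- Alternate form of `Lz`. -/
def Fz (n : ℕ) [NeZero n] (j : ZMod n) (x : ZMod n → ℤ) : ℤ :=
  ∑ m : ZMod n, ((m - j).val : ℤ) * x m

lemma Lz_eq_Fz (n : ℕ) [NeZero n] (j : ZMod n) (x : ZMod n → ℤ) :
    Lz n j x = Fz n j x := by
  unfold Lz Fz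
  refine Finset.sum_nbij' (i := fun s => j + (s : ZMod n)) (j := fun m => (m - j).val)
    (fun s hs => Finset.mem_univ _) (fun m _ => Finset.mem_range.mpr (ZMod.val_lt _))
    ?_ ?_ ?_
  · intro s hs
    simp only [add_sub_cancel_left]
    exact ZMod.val_cast_of_lt (Finset.mem_range.mp hs)
  · intro m _
    simp [ZMod.natCast_val, ZMod.cast_id]
  · intro s hs
    congr 1
    simp only [add_sub_cancel_left]
    rw [ZMod.val_cast_of_lt (Finset.mem_range.mp hs)]

lemma Fz_sub (n : ℕ) [NeZero n] (j : ZMod n) (x y : ZMod n → ℤ) :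
    Fz n j (x - y) = Fz n j x - Fz n j y := by
  unfold Fz
  simp [mul_sub, Finset.sum_sub_distrib]

lemma Fz_add (n : ℕ) [NeZero n] (j : ZMod n) (x y : ZMod n → ℤ) :
    Fz n j (x + y) = Fz n j x + Fz n j y := by
  unfold Fz
  simp [mul_add, Finset.sum_add_distrib]

lemma val_sub_one' (n : ℕ) [NeZero n] (a : ZMod n) :
    ((a - 1).val : ℤ) = (a.val : ℤ) - 1 + n * (if a = 0 then 1 else 0) := by
  by_cases h : a = 0
  · subst h
    obtain ⟨m, rfl⟩ := Nat.exists_eq_succ_of_ne_zero (NeZero.ne n)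
    rw [zero_sub]
    rw [ZMod.val_neg_one]
    simp [ZMod.val_zero]
  · have h1 : 1 ≤ a.val := Nat.pos_of_ne_zero (fun hv => h ((ZMod.val_eq_zero a).mp hv))
    have hlt : a.val - 1 < n := lt_of_le_of_lt (Nat.sub_le _ _) (ZMod.val_lt a)
    have ha : a - 1 = ((a.val - 1 : ℕ) : ZMod n) := by
      rw [Nat.cast_sub h1]
      simp [ZMod.natCast_val, ZMod.cast_id]
    rw [ha, ZMod.val_cast_of_lt hlt]
    rw [Nat.cast_sub h1]
    simp [h]

lemma Fz_succ (n : ℕ) [NeZero n] (j : ZMod n) (x : ZMod n → ℤ) (hx : ∑ m, x m = 0) :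
    Fz n (j + 1) x = Fz n j x + n * x j := by
  unfold Fz
  have key : ∀ m : ZMod n, ((m - (j + 1)).val : ℤ) * x m
      = ((m - j).val : ℤ) * x m - x m + (if m = j then (n : ℤ) * x m else 0) := by
    intro m
    have hsub : m - (j + 1) = (m - j) - 1 := by ring
    rw [hsub, val_sub_one' n (m - j)]
    by_cases hm : m = j
    · subst hm
      simp
      ring
    · have hne : m - j ≠ 0 := sub_ne_zero.mpr hm
      simp [hne, hm]
      ring
  rw [Finset.sum_congr rfl (fun m _ => key m)]
  rw [Finset.sum_add_distrib, Finset.sum_sub_distrib, hx, Finset.sum_ite_eq' Finset.univ j]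
  simp

lemma Fz_dvd (n : ℕ) [NeZero n] (x : ZMod n → ℤ) (hx : ∑ m, x m = 0) (j j' : ZMod n) :
    (n : ℤ) ∣ Fz n j' x - Fz n j x := by
  have key : ∀ c : ℕ, (n : ℤ) ∣ Fz n (j + (c : ZMod n)) x - Fz n j x := by
    intro c
    induction c with
    | zero => simp
    | succ c ih =>
      have h1 : (j + ((c + 1 : ℕ) : ZMod n)) = (j + (c : ZMod n)) + 1 := by push_cast; ring
      rw [h1, Fz_succ n _ x hx]
      have h2 : Fz n (j + (c : ZMod n)) x + n * x (j + (c : ZMod n)) - Fz n j x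
          = (Fz n (j + (c : ZMod n)) x - Fz n j x) + n * x (j + (c : ZMod n)) := by ring
      rw [h2]
      exact dvd_add ih (dvd_mul_right _ _)
  have : j' = j + (((j' - j).val : ℕ) : ZMod n) := by
    simp [ZMod.natCast_val, ZMod.cast_id]
  rw [this]
  exact key _

lemma Fz_total (n : ℕ) [NeZero n] (x : ZMod n → ℤ) (hx : ∑ m, x m = 0) :
    ∑ j : ZMod n, Fz n j x = 0 := by
  unfold Fz
  rw [Finset.sum_comm]
  have h1 : ∀ m : ZMod n, ∑ j : ZMod n, ((m - j).val : ℤ) * x m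
      = (∑ a : ZMod n, ((a.val : ℤ))) * x m := by
    intro m
    rw [← Finset.sum_mul]
    congr 1
    simpa using (Equiv.subLeft m).sum_comp (fun a => ((a.val : ℤ)))
  rw [Finset.sum_congr rfl (fun m _ => h1 m), ← Finset.mul_sum, hx, mul_zero]

lemma sum_range_card_le (S : Finset ℕ) : ∑ i ∈ Finset.range S.card, i ≤ ∑ i ∈ S, i := by
  induction S using Finset.induction_on_max with
  | empty => simp
  | insert a s ha ih =>
    have hmem : a ∉ s := fun h => lt_irrefl a (ha a h)
    have hcard : (insert a s).card = s.card + 1 := Finset.card_insert_of_notMem hmem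
    rw [hcard, Finset.sum_range_succ, Finset.sum_insert hmem]
    have hsub : s ⊆ Finset.range a := fun x hx => Finset.mem_range.mpr (ha x hx)
    have hle : s.card ≤ a := by simpa using Finset.card_le_card hsub
    omega

lemma sum_range_lt_of_ne (S : Finset ℕ) (k : ℕ) (hcard : S.card = k) (hne : S ≠ Finset.range k) :
    ∑ i ∈ Finset.range k, i < ∑ i ∈ S, i := by
  have hex : ∃ m ∈ S, k ≤ m := by
    by_contra h
    push_neg at h
    exact hne (Finset.eq_of_subset_of_card_le (fun x hx => Finset.mem_range.mpr (h x hx))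
      (by simp [hcard]))
  obtain ⟨m, hmS, hkm⟩ := hex
  have hk : 0 < k := by
    rcases Nat.eq_zero_or_pos k with h0 | h0
    · exfalso
      apply hne
      subst h0
      simpa [Finset.card_eq_zero] using hcard
    · exact h0
  have h1 : ∑ i ∈ S, i = m + ∑ i ∈ S.erase m, i := (Finset.add_sum_erase S (fun i => i) hmS).symm
  have h2 := sum_range_card_le (S.erase m)
  have h3 : (S.erase m).card = k - 1 := by rw [Finset.card_erase_of_mem hmS, hcard]
  rw [h3] at h2
  have h4 : ∑ i ∈ Finset.range k, i = (k - 1) + ∑ i ∈ Finset.range (k - 1), i := by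
    conv_lhs => rw [show k = (k - 1) + 1 by omega]
    rw [Finset.sum_range_succ]
    ring
  omega

lemma ddist_eq_Fz (n : ℕ) [NeZero n] (A B : Finset (ZMod n)) :
    ddist n A B
      = - Finset.univ.inf' Finset.univ_nonempty (fun j : ZMod n => Fz n j (ind n B - ind n A)) := by
  unfold ddist
  congr 1
  exact Finset.inf'_congr (H := Finset.univ_nonempty) rfl (fun j _ => Lz_eq_Fz n j _)

/-- For `J = [2, k+1]` a cyclic interval and `J' = {1, 3, 4, …, k+1}`:
`d_{J,I} - d_{J',I} = 1` for every `k`-subset `I ≠ J`, and `d_{J,J} - d_{J',J} = -(n-1)`. -/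
theorem distance_difference_interval (k n : ℕ) [NeZero n] (hk : 0 < k) (hkn : k + 1 ≤ n)
    (J J' : Finset (ZMod n))
    (hJ : J = (Finset.range k).image (fun t => ((t + 2 : ℕ) : ZMod n)))
    (hJ' : J' = insert (1 : ZMod n) ((Finset.range (k - 1)).image (fun t => ((t + 3 : ℕ) : ZMod n)))) :
    (∀ I : Finset (ZMod n), I.card = k → I ≠ J → ddist n J I - ddist n J' I = 1) ∧
    ddist n J J - ddist n J' J = -((n : ℤ) - 1) := by
  classical
  have hn2 : 2 ≤ n := by omega
  have hkltn : k < n := by omega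
  have hcastinj : ∀ a b : ℕ, a < n → b < n → ((a : ZMod n) = (b : ZMod n)) → a = b := by
    intro a b ha hb h
    rw [← ZMod.val_cast_of_lt ha, ← ZMod.val_cast_of_lt hb, h]
  have h12 : (1 : ZMod n) ≠ 2 := by
    intro h
    have h0 : ((1 : ℕ) : ZMod n) = ((0 : ℕ) : ZMod n) := by
      push_cast
      linear_combination -h
    exact absurd (hcastinj 1 0 (by omega) (by omega) h0) (by omega)
  have hJmem : ∀ m : ZMod n, m ∈ J ↔ ∃ t, t < k ∧ m = ((t + 2 : ℕ) : ZMod n) := by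
    intro m
    rw [hJ]
    simp only [Finset.mem_image, Finset.mem_range]
    constructor
    · rintro ⟨t, ht, rfl⟩; exact ⟨t, ht, rfl⟩
    · rintro ⟨t, ht, rfl⟩; exact ⟨t, ht, rfl⟩
  have hJ'mem : ∀ m : ZMod n, m ∈ J' ↔ m = 1 ∨ ∃ t, t < k - 1 ∧ m = ((t + 3 : ℕ) : ZMod n) := by
    intro m
    rw [hJ']
    simp only [Finset.mem_insert, Finset.mem_image, Finset.mem_range]
    constructor
    · rintro (h | ⟨t, ht, rfl⟩)
      · exact Or.inl h
      · exact Or.inr ⟨t, ht, rfl⟩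
    · rintro (h | ⟨t, ht, rfl⟩)
      · exact Or.inl h
      · exact Or.inr ⟨t, ht, rfl⟩
  have h1J : (1 : ZMod n) ∉ J := by
    rw [hJmem]
    rintro ⟨t, ht, hteq⟩
    have h0 : ((0 : ℕ) : ZMod n) = ((t + 1 : ℕ) : ZMod n) := by
      push_cast
      push_cast at hteq
      linear_combination hteq
    exact absurd (hcastinj 0 (t + 1) (by omega) (by omega) h0) (by omega)
  have h2J : (2 : ZMod n) ∈ J := (hJmem 2).mpr ⟨0, hk, by push_cast; ring⟩
  have h1J' : (1 : ZMod n) ∈ J' := (hJ'mem 1).mpr (Or.inl rfl)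
  have h2J' : (2 : ZMod n) ∉ J' := by
    rw [hJ'mem]
    rintro (h | ⟨t, ht, hteq⟩)
    · exact h12 h.symm
    · have h0 : ((0 : ℕ) : ZMod n) = ((t + 1 : ℕ) : ZMod n) := by
        push_cast at hteq ⊢
        linear_combination hteq
      exact absurd (hcastinj 0 (t + 1) (by omega) (by omega) h0) (by omega)
  set dvec : ZMod n → ℤ := fun m => (if m = 2 then 1 else 0) - (if m = 1 then 1 else 0) with hdvec
  have hJJ' : ind n J - ind n J' = dvec := by
    funext m
    simp only [Pi.sub_apply, hdvec, ind]
    by_cases hm2 : m = 2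
    · subst hm2
      simp [h2J, h2J', Ne.symm h12]
    · by_cases hm1 : m = 1
      · subst hm1
        simp [h1J, h1J', h12]
      · have hiff : m ∈ J ↔ m ∈ J' := by
          rw [hJmem, hJ'mem]
          constructor
          · rintro ⟨t, ht, rfl⟩
            have ht0 : t ≠ 0 := by
              rintro rfl
              exact hm2 (by push_cast; ring)
            refine Or.inr ⟨t - 1, by omega, ?_⟩
            congr 1
            omega
          · rintro (h | ⟨t, ht, rfl⟩)
            · exact absurd h hm1
            · exact ⟨t + 1, by omega, by congr 1⟩
        by_cases hmJ : m ∈ J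
        · simp [hmJ, hiff.mp hmJ, hm1, hm2]
        · have hmJ' : m ∉ J' := fun h => hmJ (hiff.mpr h)
          simp [hmJ, hmJ', hm1, hm2]
  set φ : ZMod n → ℕ := fun m => (m - 2).val with hφdef
  have hφinj : Function.Injective φ := by
    intro a b h
    have h2 : a - 2 = b - 2 := ZMod.val_injective n h
    have h3 := congrArg (· + 2) h2
    simpa using h3
  have hφcast : ∀ t : ℕ, t < n → φ ((t + 2 : ℕ) : ZMod n) = t := by
    intro t ht
    have h : ((t + 2 : ℕ) : ZMod n) - 2 = ((t : ℕ) : ZMod n) := by push_cast; ring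
    simp only [hφdef, h]
    exact ZMod.val_cast_of_lt ht
  have hJimage : J.image φ = Finset.range k := by
    rw [hJ, Finset.image_image]
    have heq : ∀ t ∈ Finset.range k, (φ ∘ fun t : ℕ => ((t + 2 : ℕ) : ZMod n)) t = id t := by
      intro t ht
      exact hφcast t (lt_trans (Finset.mem_range.mp ht) hkltn)
    rw [Finset.image_congr heq, Finset.image_id]
  have hJcard : J.card = k := by
    rw [← Finset.card_image_of_injective J hφinj, hJimage, Finset.card_range]
  have hind_sum : ∀ A : Finset (ZMod n), ∑ m, ind n A m = (A.card : ℤ) := by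
    intro A
    simp [ind, Finset.sum_ite_mem, Finset.univ_inter]
  have hFind : ∀ (j : ZMod n) (A : Finset (ZMod n)),
      Fz n j (ind n A) = ∑ m ∈ A, ((m - j).val : ℤ) := by
    intro j A
    unfold Fz
    simp [ind, mul_ite, Finset.sum_ite_mem, Finset.univ_inter]
  have hpos : ∀ I : Finset (ZMod n), I.card = k → I ≠ J → 0 < Fz n 2 (ind n I - ind n J) := by
    intro I hIcard hIne
    rw [Fz_sub, hFind, hFind]
    have hsumA : ∀ A : Finset (ZMod n), ∑ m ∈ A, ((m - 2).val : ℤ) = ∑ s ∈ A.image φ, (s : ℤ) := by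
      intro A
      rw [Finset.sum_image (fun a _ b _ h => hφinj h)]
    rw [hsumA, hsumA, hJimage]
    have hScard : (I.image φ).card = k := by
      rw [Finset.card_image_of_injective I hφinj, hIcard]
    have hSne : I.image φ ≠ Finset.range k := by
      intro h
      apply hIne
      apply Finset.eq_of_subset_of_card_le ?_ (by rw [hJcard, hIcard])
      intro m hm
      have hmm : φ m ∈ J.image φ := by
        rw [hJimage, ← h]
        exact Finset.mem_image_of_mem φ hm
      obtain ⟨m', hm', hmeq⟩ := Finset.mem_image.mp hmm
      rwa [← hφinj hmeq]
    have hlt := sum_range_lt_of_ne (I.image φ) k hScard hSne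
    have hcast : (∑ s ∈ Finset.range k, (s : ℤ)) < ∑ s ∈ I.image φ, (s : ℤ) := by
      rw [← Nat.cast_sum, ← Nat.cast_sum]
      exact_mod_cast hlt
    linarith
  -- value of Fz on dvec
  have hgJ : ∀ j : ZMod n, Fz n j dvec = 1 - n * (if j = 2 then 1 else 0) := by
    intro j
    have h1 : Fz n j dvec = ((2 - j : ZMod n).val : ℤ) - ((1 - j : ZMod n).val : ℤ) := by
      unfold Fz
      simp only [hdvec, mul_sub, Finset.sum_sub_distrib, mul_ite, mul_one, mul_zero]
      rw [Finset.sum_ite_eq' Finset.univ (2 : ZMod n), Finset.sum_ite_eq' Finset.univ (1 : ZMod n)]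
      simp
    rw [h1]
    have h2 : (1 : ZMod n) - j = (2 - j) - 1 := by ring
    rw [h2, val_sub_one' n (2 - j)]
    by_cases hj : j = 2
    · subst hj
      simp
      ring
    · have hne : (2 : ZMod n) - j ≠ 0 := sub_ne_zero.mpr (fun h => hj h.symm)
      simp [hne, hj]
  -- part 2: ddist n J J = 0
  have hzero : (fun j : ZMod n => Fz n j (ind n J - ind n J)) = fun _ : ZMod n => (0 : ℤ) := by
    funext j
    rw [sub_self]
    simp [Fz]
  have hddJJ : ddist n J J = 0 := by
    rw [ddist_eq_Fz, hzero, Finset.inf'_const]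
    ring
  have hddJ'J : ddist n J' J = (n : ℤ) - 1 := by
    rw [ddist_eq_Fz]
    have hfun : (fun j : ZMod n => Fz n j (ind n J - ind n J'))
        = fun j : ZMod n => 1 - (n : ℤ) * (if j = 2 then 1 else 0) := by
      funext j
      rw [hJJ']
      exact hgJ j
    rw [hfun]
    have hinf : Finset.univ.inf' Finset.univ_nonempty
        (fun j : ZMod n => 1 - (n : ℤ) * (if j = 2 then 1 else 0)) = 1 - n := by
      apply le_antisymm
      · have h := Finset.inf'_le (fun j : ZMod n => 1 - (n : ℤ) * (if j = 2 then 1 else 0))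
          (Finset.mem_univ (2 : ZMod n))
        refine le_trans h ?_
        simp
      · apply Finset.le_inf'
        intro j _
        by_cases hj : j = 2
        · simp [hj]
        · simp [hj]
    rw [hinf]
    ring
  constructor
  · -- part 1
    intro I hIcard hIne
    have hxsum : ∑ m, (ind n I - ind n J) m = 0 := by
      simp only [Pi.sub_apply]
      rw [Finset.sum_sub_distrib, hind_sum, hind_sum, hIcard, hJcard, sub_self]
    obtain ⟨j0, _, hj0⟩ := Finset.exists_mem_eq_inf' (Finset.univ_nonempty)
      (fun j : ZMod n => Fz n j (ind n I - ind n J))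
    set M := Finset.univ.inf' Finset.univ_nonempty
      (fun j : ZMod n => Fz n j (ind n I - ind n J)) with hMdef
    have hMle : M ≤ 0 := by
      have htot := Fz_total n _ hxsum
      have hex : ∃ j ∈ Finset.univ, Fz n j (ind n I - ind n J) ≤ (fun _ : ZMod n => (0 : ℤ)) j := by
        apply Finset.exists_le_of_sum_le Finset.univ_nonempty
        rw [htot]
        simp
      obtain ⟨j1, _, hj1⟩ := hex
      exact le_trans (Finset.inf'_le _ (Finset.mem_univ j1)) hj1
    have hf2pos : 0 < Fz n 2 (ind n I - ind n J) := hpos I hIcard hIne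
    have hj0ne2 : j0 ≠ 2 := by
      intro h
      rw [h] at hj0
      rw [← hj0] at hf2pos
      linarith
    have hdvd : (n : ℤ) ∣ Fz n 2 (ind n I - ind n J) - M := by
      rw [hj0]
      exact Fz_dvd n _ hxsum j0 2
    have hge : M + n ≤ Fz n 2 (ind n I - ind n J) := by
      have hlt : 0 < Fz n 2 (ind n I - ind n J) - M := by linarith
      have := Int.le_of_dvd hlt hdvd
      linarith
    have hIJ' : ind n I - ind n J' = (ind n I - ind n J) + dvec := by
      rw [← hJJ']
      funext m
      simp
    have hg : ∀ j : ZMod n, Fz n j (ind n I - ind n J')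
        = Fz n j (ind n I - ind n J) + (1 - (n : ℤ) * (if j = 2 then 1 else 0)) := by
      intro j
      rw [hIJ', Fz_add, hgJ j]
    have hinfg : Finset.univ.inf' Finset.univ_nonempty
        (fun j : ZMod n => Fz n j (ind n I - ind n J')) = M + 1 := by
      apply le_antisymm
      · have h := Finset.inf'_le (fun j : ZMod n => Fz n j (ind n I - ind n J'))
          (Finset.mem_univ j0)
        have e0 : (if j0 = 2 then (1 : ℤ) else 0) = 0 := if_neg hj0ne2
        rw [hg j0, e0, ← hj0] at h
        linarith
      · apply Finset.le_inf'
        intro j _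
        rw [hg j]
        by_cases hj : j = 2
        · subst hj
          have e1 : (if (2 : ZMod n) = 2 then (1 : ℤ) else 0) = 1 := if_pos rfl
          rw [e1]
          linarith
        · have e0 : (if j = 2 then (1 : ℤ) else 0) = 0 := if_neg hj
          rw [e0]
          have hle := Finset.inf'_le (fun j : ZMod n => Fz n j (ind n I - ind n J))
            (Finset.mem_univ j)
          rw [← hMdef] at hle
          linarith
    rw [ddist_eq_Fz, ddist_eq_Fz, hinfg, ← hMdef]
    ring
  · rw [hddJJ, hddJ'J]
    ring
end

section
/- For n ≥ 4 and the cyclic system defining pure kinematic shifts, the vectors v_i = Σ_{j=0}^{n/g - 1} (e^{[i+gj, i+gj+k-1]} - e^{[i+gj+1, i+gj+k]}) ∈ ℝ^n for i = 1, ..., g-1 (where e^{[a,b]} denotes the indicator vector of the cyclic window, recorded as the coefficient vector (c_1,...,c_n) with c_j the coefficient of the window starting at j) are linearly independent, where g = gcd(k,n). -/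
/-! Index the vectors from `0`, so the `i`-th one is `e_{i+1} - e_{i+2}` on residues mod `g`.
The functionals `f ↦ ∑_{r=1}^{j+1} f(r)`, `j = 0, …, g-2`, form a dual family: summing the
`i`-th vector over the residues `1, …, j+1` telescopes to `δ_{ij}`, because the `-1` of the last
vector sits at the residue `0`, which none of these sums sees. -/

open Finset

/-- The coefficient of `v_{i+1}` at a position of residue `r` modulo `g`. -/
def residueDiff (R : Type*) [Ring R] (g i r : ℕ) : R :=
  (if r = (i + 1) % g then 1 else 0) - (if r = (i + 2) % g then 1 else 0)

theorem sum_Icc_residueDiff (R : Type*) [Ring R] {g i j : ℕ} (hi : i < g - 1) (hj : j < g - 1) :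
    ∑ r ∈ Icc 1 (j + 1), residueDiff R g i r = if i = j then 1 else 0 := by
  have hplus : (i + 1) % g = i + 1 := Nat.mod_eq_of_lt (by omega)
  have hminus : (i + 2) % g ∈ Icc 1 (j + 1) ↔ i + 1 ≤ j := by
    rcases (by omega : i + 2 < g ∨ i + 2 = g) with h | h
    · rw [Nat.mod_eq_of_lt h, mem_Icc]; omega
    · rw [h, Nat.mod_self, mem_Icc]; omega
  simp only [residueDiff, sum_sub_distrib, sum_ite_eq', hplus, hminus, mem_Icc]
  split_ifs <;> first | omega | simp

theorem ZMod.val_natCast_mod_of_dvd {n g r : ℕ} (hg : g ∣ n) (hr : r < g) :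
    (r : ZMod n).val % g = r := by
  have hrn : r % n = r := by
    rcases Nat.eq_zero_or_pos n with rfl | hn
    · exact Nat.mod_zero r
    · exact Nat.mod_eq_of_lt (hr.trans_le (Nat.le_of_dvd hn hg))
  rw [ZMod.val_natCast, hrn, Nat.mod_eq_of_lt hr]

theorem linearIndependent_residueDiff_val (R : Type*) [Ring R] {n g : ℕ} (hg : g ∣ n) :
    LinearIndependent R
      (fun i : Fin (g - 1) => fun m : ZMod n => residueDiff R g i (m.val % g)) := by
  let L : (ZMod n → R) →ₗ[R] Fin (g - 1) → R :=
    LinearMap.pi fun j => ∑ r ∈ Icc 1 (j.val + 1), LinearMap.proj (r : ZMod n)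
  refine LinearIndependent.of_comp L ?_
  convert (Pi.basisFun R (Fin (g - 1))).linearIndependent using 1
  ext i j
  have hval : ∀ r ∈ Icc 1 (j.val + 1), (r : ZMod n).val % g = r := fun r hr =>
    ZMod.val_natCast_mod_of_dvd hg (by rw [mem_Icc] at hr; omega)
  simp only [L, Function.comp_apply, LinearMap.pi_apply, LinearMap.sum_apply,
    LinearMap.proj_apply, Pi.basisFun_apply, Pi.single_apply]
  rw [sum_congr rfl fun r hr => by rw [hval r hr], sum_Icc_residueDiff R i.isLt j.isLt]
  simp only [eq_comm, Fin.ext_iff]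

theorem pure_shift_vectors_linearIndependent_general (k n : ℕ) :
    LinearIndependent ℝ (fun i : Fin (Nat.gcd k n - 1) => (fun m : ZMod n =>
      (if m.val % Nat.gcd k n = (i.val + 1) % Nat.gcd k n then (1 : ℝ) else 0)
        - (if m.val % Nat.gcd k n = (i.val + 2) % Nat.gcd k n then (1 : ℝ) else 0))) :=
  linearIndependent_residueDiff_val ℝ (Nat.gcd_dvd_right k n)

/-- With `g = gcd(k,n)`, the coefficient vectors `v_i ∈ ℝ^n` (`i = 1, …, g-1`) with entry `+1`
at the positions `≡ i (mod g)` and `-1` at the positions `≡ i+1 (mod g)` are linearly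
independent. -/
theorem pure_shift_vectors_linearIndependent (k n : ℕ) (hk : 0 < k) (hn : 4 ≤ n)
    (hkn : k ≤ n) :
    LinearIndependent ℝ (fun i : Fin (Nat.gcd k n - 1) => (fun m : ZMod n =>
      (if m.val % Nat.gcd k n = (i.val + 1) % Nat.gcd k n then (1 : ℝ) else 0)
        - (if m.val % Nat.gcd k n = (i.val + 2) % Nat.gcd k n then (1 : ℝ) else 0))) :=
  pure_shift_vectors_linearIndependent_general k n
end
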